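/- arXiv:quant-ph/0509203 — 4 statements merged into one kernel-verified Lean document; each statement's English description precedes it below -/
import Mathlib

section
/- For f1, f2, f3, f4 ∈ [0,1], the expression 3(f1f2 + f1f3 + f1f4 + f2f3 + f2f4 + f3f4) − ((f1f2f3)^2 + (f1f2f4)^2 + (f1f3f4)^2 + (f2f3f4)^2) − Σ_{pairs} (f_i f_j)^2 f_k f_l − 6 f1f2f3f4 − 2 (f1f2f3f4)^2 is nonnegative, where the third sum runs over the three partitions of {1,2,3,4} into pairs {i,j},{k,l}, counted with both orderings (i.e., six terms (f_i f_j)^2 f_k f_l). -/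
lemma aux_term (a b c d : ℝ) (ha0 : 0 ≤ a) (ha1 : a ≤ 1) (hb0 : 0 ≤ b) (hb1 : b ≤ 1)
    (hc0 : 0 ≤ c) (hc1 : c ≤ 1) (hd0 : 0 ≤ d) (hd1 : d ≤ 1) :
    0 ≤ a*b*(3 - a*b*c*d - c*d - (1/3)*(a*b)*(c*d)^2 - (1/3)*(a*b)*(c^2+d^2)) := by
  have hab : 0 ≤ a*b := mul_nonneg ha0 hb0
  have hab1 : a*b ≤ 1 := mul_le_one₀ ha1 hb0 hb1
  have hcd : 0 ≤ c*d := mul_nonneg hc0 hd0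
  have hcd1 : c*d ≤ 1 := mul_le_one₀ hc1 hd0 hd1
  have h1 : a*b*c*d ≤ 1 := by nlinarith
  have h2 : (a*b)*(c*d)^2 ≤ 1 := by nlinarith
  have hc2 : c^2 ≤ 1 := by nlinarith
  have hd2 : d^2 ≤ 1 := by nlinarith
  have h3 : (a*b)*(c^2+d^2) ≤ 2 := by nlinarith
  nlinarith

/-- The numerator of `∂f_out/∂f₅` is nonnegative for `f₁,…,f₄ ∈ [0,1]`. -/
theorem derivative_numerator_nonneg (f1 f2 f3 f4 : ℝ)
    (h1 : f1 ∈ Set.Icc (0:ℝ) 1) (h2 : f2 ∈ Set.Icc (0:ℝ) 1)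
    (h3 : f3 ∈ Set.Icc (0:ℝ) 1) (h4 : f4 ∈ Set.Icc (0:ℝ) 1) :
    0 ≤ 3 * (f1*f2 + f1*f3 + f1*f4 + f2*f3 + f2*f4 + f3*f4)
        - ((f1*f2*f3)^2 + (f1*f2*f4)^2 + (f1*f3*f4)^2 + (f2*f3*f4)^2)
        - ((f1*f2)^2*(f3*f4) + (f3*f4)^2*(f1*f2)
          + (f1*f3)^2*(f2*f4) + (f2*f4)^2*(f1*f3)
          + (f1*f4)^2*(f2*f3) + (f2*f3)^2*(f1*f4))
        - 6 * (f1*f2*f3*f4) - 2 * (f1*f2*f3*f4)^2 := by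
  obtain ⟨a0, a1⟩ := h1; obtain ⟨b0, b1⟩ := h2
  obtain ⟨c0, c1⟩ := h3; obtain ⟨d0, d1⟩ := h4
  have t1 := aux_term f1 f2 f3 f4 a0 a1 b0 b1 c0 c1 d0 d1
  have t2 := aux_term f3 f4 f1 f2 c0 c1 d0 d1 a0 a1 b0 b1
  have t3 := aux_term f1 f3 f2 f4 a0 a1 c0 c1 b0 b1 d0 d1
  have t4 := aux_term f2 f4 f1 f3 b0 b1 d0 d1 a0 a1 c0 c1
  have t5 := aux_term f1 f4 f2 f3 a0 a1 d0 d1 b0 b1 c0 c1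
  have t6 := aux_term f2 f3 f1 f4 b0 b1 c0 c1 a0 a1 d0 d1
  nlinarith [t1, t2, t3, t4, t5, t6]
end

section
/- If a sequence satisfies x_k ≤ c x_{k-1}^2 with c>0 and x_0 < 1/c, and the overhead at level k is n^k for a fixed n ≥ 2, then there exists k with x_k < 1/N and overhead n^k ≤ (c' log N)^{log_2 n} for some constant c' depending only on c and x_0 (polylogarithmic overhead). -/
/-- Polylogarithmic overhead: under the quadratic recursion with `x₀ ≤ 1/(2c)`,
there is a constant `c'` (depending only on `c`, `x₀`, `n`) such that for every
target accuracy `1/N` one may find a level `k` with `x_k < 1/N` and overhead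
`n^k ≤ (c' log N)^{log₂ n}`. -/
theorem polylog_overhead (c x0 : ℝ) (n : ℕ) (hn : 2 ≤ n) (hc : 0 < c)
    (hx0 : 0 ≤ x0) (h0 : x0 ≤ 1 / (2 * c)) :
    ∃ c' > (0:ℝ), ∀ N : ℝ, 2 ≤ N →
      ∀ x : ℕ → ℝ, x 0 = x0 → (∀ j, 0 ≤ x j) →
        (∀ j, x (j + 1) ≤ c * (x j) ^ 2) →
        ∃ k : ℕ, x k < 1 / N ∧
          (n : ℝ) ^ k ≤ (c' * Real.log N) ^ (Real.logb 2 n) := by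
  classical
  have hlog2 : (0:ℝ) < Real.log 2 := Real.log_pos one_lt_two
  set c' : ℝ := (3 + 2 * |Real.log c| / Real.log 2) / Real.log 2 with hc'def
  have hc'pos : 0 < c' := by positivity
  refine ⟨c', hc'pos, ?_⟩
  intro N hN x hx0eq hxnn hrec
  have hNpos : (0:ℝ) < N := by linarith
  have hlogN : Real.log 2 ≤ Real.log N := Real.log_le_log (by norm_num) hN
  have hlogNpos : 0 < Real.log N := lt_of_lt_of_le hlog2 hlogN
  -- key bound
  have hcx0 : c * x0 ≤ 1/2 := by
    have h2c : (0:ℝ) < 2 * c := by linarith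
    calc c * x0 ≤ c * (1 / (2*c)) := by
          exact mul_le_mul_of_nonneg_left h0 hc.le
      _ = 1/2 := by field_simp
  have key : ∀ k, c * x k ≤ (1/2 : ℝ)^(2^k) := by
    intro k
    induction k with
    | zero => simpa [hx0eq] using hcx0
    | succ k ih =>
      have hnn : 0 ≤ c * x k := mul_nonneg hc.le (hxnn k)
      have h1 : c * x (k+1) ≤ (c * x k)^2 := by
        have := hrec k
        nlinarith [hxnn k, hc.le]
      calc c * x (k+1) ≤ (c * x k)^2 := h1
        _ ≤ ((1/2:ℝ)^(2^k))^2 := pow_le_pow_left₀ hnn ih 2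
        _ = (1/2:ℝ)^(2^(k+1)) := by
            rw [← pow_mul, pow_succ]
  set B : ℝ := (Real.log N - Real.log c) / Real.log 2 with hBdef
  have hex : ∃ k : ℕ, B < (2:ℝ)^k := pow_unbounded_of_one_lt B one_lt_two
  set k := Nat.find hex with hkdef
  have hk : B < (2:ℝ)^k := Nat.find_spec hex
  refine ⟨k, ?_, ?_⟩
  · -- accuracy
    have hcxk : c * x k ≤ (1/2:ℝ)^(2^k) := key k
    have hstrict : ((1/2:ℝ))^(2^k) < c / N := by
      have hlhs : (0:ℝ) < (1/2:ℝ)^(2^k) := by positivity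
      have hrhs : (0:ℝ) < c / N := by positivity
      rw [← Real.log_lt_log_iff hlhs hrhs]
      have hlog_lhs : Real.log ((1/2:ℝ)^(2^k)) = -((2:ℝ)^k * Real.log 2) := by
        rw [Real.log_pow]
        rw [Real.log_div one_ne_zero (by norm_num), Real.log_one]
        push_cast
        ring
      rw [hlog_lhs, Real.log_div (ne_of_gt hc) (ne_of_gt hNpos)]
      have : Real.log N - Real.log c < (2:ℝ)^k * Real.log 2 := by
        have := (div_lt_iff₀ hlog2).mp hk
        linarith
      linarith
    have : c * x k < c * (1/N) := by
      have : c * (1/N) = c / N := by ring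
      rw [this]
      exact lt_of_le_of_lt hcxk hstrict
    exact lt_of_mul_lt_mul_left this hc.le
  · -- overhead
    have h2k : ((2:ℝ))^k ≤ c' * Real.log N := by
      have habs : Real.log N - Real.log c ≤ Real.log N + |Real.log c| := by
        have := abs_le.mp (le_refl |Real.log c|)
        have h1 : -|Real.log c| ≤ Real.log c := neg_abs_le _
        linarith
      have hBle : B ≤ (Real.log N + |Real.log c|) / Real.log 2 := by
        rw [hBdef]; gcongr
      have habs2 : |Real.log c| ≤ |Real.log c| * (Real.log N / Real.log 2) := by
        have h1 : 1 ≤ Real.log N / Real.log 2 := (one_le_div hlog2).mpr hlogN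
        nlinarith [abs_nonneg (Real.log c)]
      rcases Nat.eq_zero_or_pos k with hk0 | hkpos
      · rw [hk0]
        simp only [pow_zero]
        have : 3 / Real.log 2 ≤ c' := by
          rw [hc'def]
          apply div_le_div_of_nonneg_right _ hlog2.le
          have : 0 ≤ 2 * |Real.log c| / Real.log 2 := by positivity
          linarith
        have hlog2le : Real.log 2 ≤ 1 := by
          have := Real.log_le_sub_one_of_pos (by norm_num : (0:ℝ) < 2)
          linarith
        have h3 : (1:ℝ) ≤ 3 / Real.log 2 * Real.log 2 := by
          rw [div_mul_cancel₀ _ (ne_of_gt hlog2)]; norm_num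
        calc (1:ℝ) ≤ 3 / Real.log 2 * Real.log 2 := h3
          _ ≤ c' * Real.log N := by
              apply mul_le_mul this hlogN hlog2.le (le_trans (by positivity) this)
      · obtain ⟨j, hkeq⟩ : ∃ j, k = j + 1 := ⟨k - 1, (Nat.succ_pred_eq_of_pos hkpos).symm⟩
        have hjlt : j < Nat.find hex := by omega
        have hj : ¬ (B < (2:ℝ)^j) := Nat.find_min hex hjlt
        push_neg at hj
        have h2B : (2:ℝ)^(j+1) ≤ 2 * B := by
          rw [pow_succ]
          nlinarith
        rw [hkeq]
        calc ((2:ℝ))^(j+1) ≤ 2 * B := h2B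
          _ ≤ 2 * ((Real.log N + |Real.log c|) / Real.log 2) := by linarith
          _ = (2 * (Real.log N + |Real.log c|)) / Real.log 2 := by ring
          _ ≤ ((3 + 2 * |Real.log c| / Real.log 2) * Real.log N) / Real.log 2 := by
              have h1 : (3 + 2 * |Real.log c| / Real.log 2) * Real.log N
                  = 3 * Real.log N + 2 * (|Real.log c| * (Real.log N / Real.log 2)) := by
                ring
              gcongr (?_) / _
              rw [h1]
              linarith [habs2, hlogNpos]
          _ = c' * Real.log N := by rw [hc'def]; ring
    -- convert to rpow
    have hnpos : (0:ℝ) < (n:ℝ) := by positivity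
    have heq : (((2:ℝ))^k : ℝ) ^ (Real.logb 2 n) = (n:ℝ)^k := by
      rw [← Real.rpow_natCast 2 k, ← Real.rpow_mul (by norm_num : (0:ℝ) ≤ 2),
          mul_comm, Real.rpow_mul (by norm_num : (0:ℝ) ≤ 2),
          Real.rpow_logb (by norm_num) (by norm_num) hnpos, Real.rpow_natCast]
    have hlogbnn : 0 ≤ Real.logb 2 n :=
      Real.logb_nonneg one_lt_two (by exact_mod_cast Nat.one_le_of_lt hn)
    rw [← heq]
    exact Real.rpow_le_rpow (by positivity) h2k hlogbnn
end

section
/- Let E1,...,Em be events with P(E_i) ≤ p_i (not necessarily independent, but each with conditional probability ≤ p_i given any configuration of the others). Then the probability that at least two of them occur is at most Σ_{i<j} p_i p_j. -/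
open MeasureTheory ProbabilityTheory
open scoped ENNReal

/-! Fix `i`. The configurations of the events other than `E i` cut the space into atoms on
each of which `E i` has relative mass at most `p i`, so the same holds on every union of atoms:
on the whole space, and on `E j` for `j ≠ i`. Hence `P(E i ∩ E j) ≤ p i P(E j) ≤ p i p j`, and a
union bound over the pairs `i < j` finishes. -/

section

variable {Ω : Type*} [MeasurableSpace Ω] {μ : Measure Ω}

theorem measure_inter_preimage_le_mul_of_forall_fiber {κ : Type*} {f : Ω → κ} {F : Set Ω}
    {c : ℝ≥0∞} (s : Finset κ) (hf : ∀ k ∈ s, MeasurableSet (f ⁻¹' {k}))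
    (h : ∀ k ∈ s, μ (F ∩ f ⁻¹' {k}) ≤ c * μ (f ⁻¹' {k})) :
    μ (F ∩ f ⁻¹' s) ≤ c * μ (f ⁻¹' s) :=
  calc μ (F ∩ f ⁻¹' s) = μ (⋃ k ∈ s, F ∩ f ⁻¹' {k}) := by
        rw [← Set.inter_iUnion₂, Finset.set_biUnion_preimage_singleton]
    _ ≤ ∑ k ∈ s, μ (F ∩ f ⁻¹' {k}) := measure_biUnion_finset_le _ _
    _ ≤ ∑ k ∈ s, c * μ (f ⁻¹' {k}) := Finset.sum_le_sum h
    _ = c * μ (f ⁻¹' s) := by rw [← Finset.mul_sum, sum_measure_preimage_singleton s hf]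

theorem measure_setOf_exists_pair_le {ι : Type*} [Fintype ι] [LinearOrder ι]
    [LocallyFiniteOrderTop ι] (μ : Measure Ω) (E : ι → Set Ω) :
    μ {ω | ∃ i j, i ≠ j ∧ ω ∈ E i ∧ ω ∈ E j} ≤ ∑ i, ∑ j ∈ Finset.Ioi i, μ (E i ∩ E j) := by
  have hcover : {ω | ∃ i j, i ≠ j ∧ ω ∈ E i ∧ ω ∈ E j}
      ⊆ ⋃ i ∈ (Finset.univ : Finset ι), ⋃ j ∈ Finset.Ioi i, E i ∩ E j := by
    rintro ω ⟨i, j, hij, hi, hj⟩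
    simp only [Set.mem_iUnion, Finset.mem_univ, Finset.mem_Ioi, exists_prop, true_and]
    rcases hij.lt_or_gt with hlt | hgt
    · exact ⟨i, j, hlt, hi, hj⟩
    · exact ⟨j, i, hgt, hj, hi⟩
  calc _ ≤ _ := measure_mono hcover
    _ ≤ ∑ i, μ (⋃ j ∈ Finset.Ioi i, E i ∩ E j) := measure_biUnion_finset_le _ _
    _ ≤ _ := Finset.sum_le_sum fun i _ => measure_biUnion_finset_le _ _

end

section

variable {Ω ι : Type*} [DecidableEq ι]

def otherEventsAtom [Fintype ι] (E : ι → Set Ω) (i : ι) (σ : ι → Bool) : Set Ω :=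
  ⋂ j ∈ Finset.univ.erase i, if σ j then E j else (E j)ᶜ

open Classical in
/-- The `i`-th entry is pinned to `true`, so that the fibres of this map are exactly the
sets `otherEventsAtom E i σ` with `σ i = true`. -/
noncomputable def otherEventsPattern (E : ι → Set Ω) (i : ι) (ω : Ω) : ι → Bool :=
  Function.update (fun j => decide (ω ∈ E j)) i true

variable {E : ι → Set Ω} {i : ι}

theorem measurable_otherEventsPattern [MeasurableSpace Ω] (hE : ∀ j, MeasurableSet (E j)) :
    Measurable (otherEventsPattern E i) := by
  refine measurable_pi_iff.mpr fun j => measurable_to_bool ?_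
  by_cases hj : j = i
  · subst hj
    simp [otherEventsPattern, Set.preimage]
  · simpa [otherEventsPattern, hj, Set.preimage] using hE j

theorem otherEventsAtom_eq_preimage_otherEventsPattern [Fintype ι] {σ : ι → Bool}
    (hσ : σ i = true) : otherEventsAtom E i σ = otherEventsPattern E i ⁻¹' {σ} := by
  ext ω
  simp only [otherEventsAtom, Set.mem_iInter, Finset.mem_erase, Finset.mem_univ, and_true,
    Set.mem_preimage, Set.mem_singleton_iff, otherEventsPattern, Function.update_eq_iff, hσ, true_and]
  refine forall₂_congr fun j _ => ?_
  cases σ j <;> simp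

theorem preimage_otherEventsPattern_eq_empty {σ : ι → Bool} (hσ : σ i = false) :
    otherEventsPattern E i ⁻¹' {σ} = ∅ := by
  ext ω
  simp [otherEventsPattern, Function.update_eq_iff, hσ]

theorem preimage_otherEventsPattern_setOf_apply {j : ι} (hj : j ≠ i) :
    otherEventsPattern E i ⁻¹' {σ | σ j = true} = E j := by
  ext ω
  simp [otherEventsPattern, hj]

variable [Fintype ι] [MeasurableSpace Ω] {μ : Measure Ω} {c : ℝ≥0∞}

theorem measure_inter_preimage_otherEventsPattern_le (hE : ∀ j, MeasurableSet (E j))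
    (hcond : ∀ σ, μ (E i ∩ otherEventsAtom E i σ) ≤ c * μ (otherEventsAtom E i σ))
    (s : Finset (ι → Bool)) :
    μ (E i ∩ otherEventsPattern E i ⁻¹' s) ≤ c * μ (otherEventsPattern E i ⁻¹' s) := by
  refine measure_inter_preimage_le_mul_of_forall_fiber s
    (fun σ _ => measurable_otherEventsPattern hE (measurableSet_singleton σ)) fun σ _ => ?_
  cases hσ : σ i
  · simp [preimage_otherEventsPattern_eq_empty hσ]
  · rw [← otherEventsAtom_eq_preimage_otherEventsPattern hσ]
    exact hcond σ

theorem measure_le_mul_measure_univ_of_forall_otherEventsAtom (hE : ∀ j, MeasurableSet (E j))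
    (hcond : ∀ σ, μ (E i ∩ otherEventsAtom E i σ) ≤ c * μ (otherEventsAtom E i σ)) :
    μ (E i) ≤ c * μ Set.univ := by
  simpa using measure_inter_preimage_otherEventsPattern_le hE hcond Finset.univ

theorem measure_inter_le_mul_of_forall_otherEventsAtom (hE : ∀ j, MeasurableSet (E j))
    (hcond : ∀ σ, μ (E i ∩ otherEventsAtom E i σ) ≤ c * μ (otherEventsAtom E i σ))
    {j : ι} (hj : j ≠ i) :
    μ (E i ∩ E j) ≤ c * μ (E j) := by
  simpa [preimage_otherEventsPattern_setOf_apply hj] using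
    measure_inter_preimage_otherEventsPattern_le hE hcond
      (Finset.univ.filter fun σ => σ j = true)

end

/-- Generalized second-order union bound: if each event `E i` has conditional
probability at most `p i` given any configuration (occurrence/non-occurrence) of the
other events, then the probability that at least two of the events occur is at most
`∑_{i<j} p i * p j`. -/
theorem second_order_union_bound_conditional {Ω : Type*} [MeasurableSpace Ω]
    (μ : Measure Ω) [IsProbabilityMeasure μ] (m : ℕ) (p : Fin m → ℝ)
    (hp : ∀ i, 0 ≤ p i) (E : Fin m → Set Ω) (hmeas : ∀ i, MeasurableSet (E i))
    (hcond : ∀ (i : Fin m) (σ : Fin m → Bool),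
      μ (E i ∩ ⋂ j ∈ Finset.univ.erase i, (if σ j then E j else (E j)ᶜ))
        ≤ ENNReal.ofReal (p i) *
          μ (⋂ j ∈ Finset.univ.erase i, (if σ j then E j else (E j)ᶜ))) :
    μ {ω | ∃ i j : Fin m, i ≠ j ∧ ω ∈ E i ∧ ω ∈ E j}
      ≤ ENNReal.ofReal (∑ i : Fin m, ∑ j ∈ Finset.Ioi i, p i * p j) := by
  have hpp (i j : Fin m) : 0 ≤ p i * p j := mul_nonneg (hp i) (hp j)
  have hsingle (j : Fin m) : μ (E j) ≤ ENNReal.ofReal (p j) := by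
    simpa using measure_le_mul_measure_univ_of_forall_otherEventsAtom hmeas (hcond j)
  have hpair (i j : Fin m) (hij : i < j) : μ (E i ∩ E j) ≤ ENNReal.ofReal (p i * p j) := by
    rw [ENNReal.ofReal_mul (hp i)]
    exact (measure_inter_le_mul_of_forall_otherEventsAtom hmeas (hcond i) hij.ne').trans
      (by gcongr; exact hsingle j)
  calc _ ≤ ∑ i, ∑ j ∈ Finset.Ioi i, μ (E i ∩ E j) := measure_setOf_exists_pair_le μ E
    _ ≤ ∑ i, ∑ j ∈ Finset.Ioi i, ENNReal.ofReal (p i * p j) := by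
      gcongr with i _ j hj
      exact hpair i j (Finset.mem_Ioi.mp hj)
    _ = _ := by
      rw [ENNReal.ofReal_sum_of_nonneg fun i _ => Finset.sum_nonneg fun j _ => hpp i j]
      exact Finset.sum_congr rfl fun i _ => (ENNReal.ofReal_sum_of_nonneg fun j _ => hpp i j).symm
end

section
/- Let F(x) = a + b x + c x² with a, b, c ≥ 0 and b < 1. If a ≤ (1−b)²/(4c), then F has a fixed point in [0, (1−b)/(2c)], and any sequence defined by x_1 ≤ a, x_{k+1} ≤ F(x_k) satisfies x_k ≤ (1−b−√((1−b)²−4ac))/(2c) for all k. -/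
/-- Fixed-point lemma for the quadratic map `F(x) = a + bx + cx²` with small affine
term: `F` has a fixed point in `[0, (1-b)/(2c)]`, and any (nonnegative) sequence with
`x₁ ≤ a` and `x_{k+1} ≤ F(x_k)` stays below the smaller root of `x = F(x)`. -/
theorem quadratic_fixed_point_lemma (a b c : ℝ)
    (ha : 0 ≤ a) (hb0 : 0 ≤ b) (hc : 0 < c) (hb1 : b < 1)
    (hsmall : a ≤ (1 - b) ^ 2 / (4 * c)) :
    (∃ x ∈ Set.Icc (0:ℝ) ((1 - b) / (2 * c)), a + b * x + c * x ^ 2 = x) ∧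
    (∀ x : ℕ → ℝ, (∀ k, 0 ≤ x k) → x 1 ≤ a →
      (∀ k, x (k + 1) ≤ a + b * x k + c * x k ^ 2) →
      ∀ k, 1 ≤ k →
        x k ≤ (1 - b - Real.sqrt ((1 - b) ^ 2 - 4 * a * c)) / (2 * c)) := by
  have h4c : (0:ℝ) < 4 * c := by linarith
  have hD : (0:ℝ) ≤ (1 - b) ^ 2 - 4 * a * c := by
    have h' : a * (4 * c) ≤ (1 - b) ^ 2 := (le_div_iff₀ h4c).mp hsmall
    nlinarith
  set s := Real.sqrt ((1 - b) ^ 2 - 4 * a * c) with hs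
  have hs0 : 0 ≤ s := Real.sqrt_nonneg _
  have hs2 : s ^ 2 = (1 - b) ^ 2 - 4 * a * c := Real.sq_sqrt hD
  have hsle : s ≤ 1 - b := by
    have : s ≤ Real.sqrt ((1 - b) ^ 2) := by
      apply Real.sqrt_le_sqrt; nlinarith [mul_nonneg ha hc.le]
    rwa [Real.sqrt_sq (by linarith : (0:ℝ) ≤ 1 - b)] at this
  set r := (1 - b - s) / (2 * c) with hrdef
  have h2c : (2 * c) ≠ 0 := by positivity
  have h2cr : 2 * c * r = 1 - b - s := by
    rw [hrdef]; field_simp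
  have hfix : a + b * r + c * r ^ 2 = r := by
    have key : 4 * c * (a + b * r + c * r ^ 2) = 4 * c * r := by
      linear_combination (2*b - 2 + 2*c*r + (1 - b - s)) * h2cr + hs2
    exact mul_left_cancel₀ (by positivity : (4:ℝ) * c ≠ 0) key
  have hr0 : 0 ≤ r := by
    apply div_nonneg (by linarith) (by linarith)
  have hrle : r ≤ (1 - b) / (2 * c) := by
    apply div_le_div_of_nonneg_right _ (by linarith)
    · linarith
  refine ⟨⟨r, ⟨hr0, hrle⟩, hfix⟩, ?_⟩
  intro x hx hx1 hrec k hk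
  have har : a ≤ r := by
    have hbr : 0 ≤ b * r := mul_nonneg hb0 hr0
    have hcr : 0 ≤ c * r ^ 2 := by positivity
    linarith
  induction k, hk using Nat.le_induction with
  | base => exact le_trans hx1 har
  | succ k hk ih =>
    have h1 : b * x k ≤ b * r := mul_le_mul_of_nonneg_left ih hb0
    have h2 : c * x k ^ 2 ≤ c * r ^ 2 := by
      apply mul_le_mul_of_nonneg_left _ hc.le
      exact pow_le_pow_left₀ (hx k) ih 2
    calc x (k + 1) ≤ a + b * x k + c * x k ^ 2 := hrec k
      _ ≤ a + b * r + c * r ^ 2 := by linarith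
      _ = r := hfix
end
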